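/- arXiv:1107.0509 — 4 statements merged into one kernel-verified Lean document; each statement's English description precedes it below -/
import Mathlib

section
/- The Cartan-type decomposition relations hold for the Jacobi Lie algebra: [𝔨^J, 𝔨^J] ⊆ 𝔨^J and [𝔨^J, 𝔭^J] ⊆ 𝔭^J. -/
open Matrix

/-- An element of the Jacobi Lie algebra `𝔤^J`, as a tuple `((X,Y,Z),(P,Q,R))`
representing `([[X,Y],[Z,−ᵗX]], (P,Q,R))`. -/
abbrev JacobiLieElt (n m : ℕ) :=
  (Matrix (Fin n) (Fin n) ℝ × Matrix (Fin n) (Fin n) ℝ × Matrix (Fin n) (Fin n) ℝ) ×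
    (Matrix (Fin m) (Fin n) ℝ × Matrix (Fin m) (Fin n) ℝ × Matrix (Fin m) (Fin m) ℝ)

/-- The Lie bracket of the Jacobi Lie algebra `𝔤^J`. -/
def jBracket {n m : ℕ} (a b : JacobiLieElt n m) : JacobiLieElt n m :=
  let X₁ := a.1.1; let Y₁ := a.1.2.1; let Z₁ := a.1.2.2
  let P₁ := a.2.1; let Q₁ := a.2.2.1
  let X₂ := b.1.1; let Y₂ := b.1.2.1; let Z₂ := b.1.2.2
  let P₂ := b.2.1; let Q₂ := b.2.2.1
  ((X₁ * X₂ - X₂ * X₁ + Y₁ * Z₂ - Y₂ * Z₁,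
    X₁ * Y₂ - X₂ * Y₁ + Y₂ * X₁ᵀ - Y₁ * X₂ᵀ,
    Z₁ * X₂ - Z₂ * X₁ + X₂ᵀ * Z₁ - X₁ᵀ * Z₂),
   (P₁ * X₂ - P₂ * X₁ + Q₁ * Z₂ - Q₂ * Z₁,
    P₁ * Y₂ - P₂ * Y₁ + Q₂ * X₁ᵀ - Q₁ * X₂ᵀ,
    P₁ * Q₂ᵀ - P₂ * Q₁ᵀ + Q₂ * P₁ᵀ - Q₁ * P₂ᵀ))

/-- Membership in `𝔨^J`: the `𝔰𝔭`-part is `[[X,−Y],[Y,X]]` with `X` skew and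
`Y` symmetric, `P = Q = 0`, and `R` symmetric. -/
def InKJ {n m : ℕ} (a : JacobiLieElt n m) : Prop :=
  a.1.1ᵀ = -a.1.1 ∧ a.1.2.1ᵀ = a.1.2.1 ∧ a.1.2.2 = -a.1.2.1 ∧
    a.2.1 = 0 ∧ a.2.2.1 = 0 ∧ a.2.2.2ᵀ = a.2.2.2

/-- Membership in `𝔭^J`: the `𝔰𝔭`-part is `[[X,Y],[Y,−X]]` with `X, Y`
symmetric, and `R = 0`. -/
def InPJ {n m : ℕ} (a : JacobiLieElt n m) : Prop :=
  a.1.1ᵀ = a.1.1 ∧ a.1.2.1ᵀ = a.1.2.1 ∧ a.1.2.2 = a.1.2.1 ∧ a.2.2.2 = 0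

/-- Cartan-type relations for the Jacobi Lie algebra:
`[𝔨^J, 𝔨^J] ⊆ 𝔨^J` and `[𝔨^J, 𝔭^J] ⊆ 𝔭^J`. -/
theorem jacobi_cartan_relations {n m : ℕ} :
    (∀ a b : JacobiLieElt n m, InKJ a → InKJ b → InKJ (jBracket a b)) ∧
    (∀ a b : JacobiLieElt n m, InKJ a → InPJ b → InPJ (jBracket a b)) := by
  constructor
  · rintro ⟨⟨X₁,Y₁,Z₁⟩,P₁,Q₁,R₁⟩ ⟨⟨X₂,Y₂,Z₂⟩,P₂,Q₂,R₂⟩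
      ⟨hX₁, hY₁, hZ₁, hP₁, hQ₁, hR₁⟩ ⟨hX₂, hY₂, hZ₂, hP₂, hQ₂, hR₂⟩
    simp only [jBracket, InKJ] at *
    subst hP₁ hQ₁ hP₂ hQ₂ hZ₁ hZ₂
    refine ⟨?_, ?_, ?_, ?_, ?_, ?_⟩ <;>
      simp [transpose_mul, transpose_add, transpose_sub, hX₁, hX₂, hY₁, hY₂,
        mul_neg, neg_mul] <;> noncomm_ring
  · rintro ⟨⟨X₁,Y₁,Z₁⟩,P₁,Q₁,R₁⟩ ⟨⟨X₂,Y₂,Z₂⟩,P₂,Q₂,R₂⟩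
      ⟨hX₁, hY₁, hZ₁, hP₁, hQ₁, hR₁⟩ ⟨hX₂, hY₂, hZ₂, hR₂⟩
    simp only [jBracket, InPJ, InKJ] at *
    subst hP₁ hQ₁ hZ₁ hZ₂ hR₂
    refine ⟨?_, ?_, ?_, ?_⟩ <;>
      simp [transpose_mul, transpose_add, transpose_sub, hX₁, hX₂, hY₁, hY₂,
        mul_neg, neg_mul] <;> noncomm_ring
end

section
/- Compatibility of the adjoint action with the unitary action: for k^J = ([[A,−B],[B,A]],(0,0,κ)) ∈ K^J and α = ([[X,Y],[Y,−X]],(P,Q,0)) ∈ 𝔭^J, if Φ(α) = (X+iY, P+iQ) ∈ T_{n,m} and θ(k^J) = (A+iB, κ), then Φ(Ad(k^J)α) = ((A+iB)(X+iY)ᵗ(A+iB), (P+iQ)ᵗ(A+iB)), i.e. the adjoint action of K^J on 𝔭^J corresponds to the action (h,κ)·(ω,z) = (hωᵗh, zᵗh) of U(n)×S(n,ℝ) on T_{n,m}. -/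
open Matrix

/-- The matrix realization of a Jacobi group element `(M,(λ,μ;κ))` with
`M = [[A,B],[C,D]]` inside `Sp(m+n, ℝ)`. -/
def rho {n m : ℕ} (A B C D : Matrix (Fin n) (Fin n) ℝ)
    (lam mu : Matrix (Fin m) (Fin n) ℝ) (kap : Matrix (Fin m) (Fin m) ℝ) :
    Matrix ((Fin n ⊕ Fin m) ⊕ (Fin n ⊕ Fin m)) ((Fin n ⊕ Fin m) ⊕ (Fin n ⊕ Fin m)) ℝ :=
  fromBlocks (fromBlocks A 0 lam 1) (fromBlocks B (A * muᵀ - B * lamᵀ) mu kap)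
             (fromBlocks C 0 0 0)   (fromBlocks D (C * muᵀ - D * lamᵀ) 0 1)

/-- The matrix realization of a Jacobi Lie algebra element
`([[X,Y],[Z,−ᵗX]],(P,Q,R))` inside `𝔰𝔭(m+n, ℝ)`. -/
def iota {n m : ℕ} (X Y Z : Matrix (Fin n) (Fin n) ℝ)
    (P Q : Matrix (Fin m) (Fin n) ℝ) (R : Matrix (Fin m) (Fin m) ℝ) :
    Matrix ((Fin n ⊕ Fin m) ⊕ (Fin n ⊕ Fin m)) ((Fin n ⊕ Fin m) ⊕ (Fin n ⊕ Fin m)) ℝ :=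
  fromBlocks (fromBlocks X 0 P 0) (fromBlocks Y Qᵀ Q R)
             (fromBlocks Z 0 0 0) (fromBlocks (-Xᵀ) (-Pᵀ) 0 0)

/-- Entrywise real part of a complex matrix. -/
def reMat {k l : Type*} (M : Matrix k l ℂ) : Matrix k l ℝ :=
  Matrix.of fun i j => (M i j).re

/-- Entrywise imaginary part of a complex matrix. -/
def imMat {k l : Type*} (M : Matrix k l ℂ) : Matrix k l ℝ :=
  Matrix.of fun i j => (M i j).im

/-- Complexification of a real matrix. -/
noncomputable def cplx {k l : Type*} (M : Matrix k l ℝ) : Matrix k l ℂ :=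
  M.map (Complex.ofReal)

lemma cplx_mul {k l o : Type*} [Fintype l] (M : Matrix k l ℝ) (N : Matrix l o ℝ) :
    cplx (M * N) = cplx M * cplx N := by
  simp only [cplx]
  exact Matrix.map_mul (f := Complex.ofRealHom)

lemma mul_expand {k l o : Type*} [Fintype l] (A B : Matrix k l ℝ) (C D : Matrix l o ℝ) :
    (cplx A + Complex.I • cplx B) * (cplx C + Complex.I • cplx D)
      = cplx (A*C - B*D) + Complex.I • cplx (A*D + B*C) := by
  have hsub : cplx (A*C - B*D) = cplx (A*C) - cplx (B*D) := by
    ext i j; simp [cplx]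
  have hadd : cplx (A*D + B*C) = cplx (A*D) + cplx (B*C) := by
    ext i j; simp [cplx]
  rw [hsub, hadd, cplx_mul, cplx_mul, cplx_mul, cplx_mul]
  simp only [Matrix.add_mul, Matrix.mul_add, Matrix.smul_mul, Matrix.mul_smul, smul_smul,
    Complex.I_mul_I, neg_smul, one_smul, smul_add]
  abel

lemma cplx_transpose {k l : Type*} (M : Matrix k l ℝ) : (cplx M)ᵀ = cplx Mᵀ := by
  ext i j; simp [cplx]

lemma transpose_expand {k l : Type*} (A B : Matrix k l ℝ) :
    (cplx A + Complex.I • cplx B)ᵀ = cplx Aᵀ + Complex.I • cplx Bᵀ := by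
  simp [transpose_add, transpose_smul, cplx_transpose]

lemma reMat_expand {k l : Type*} (U V : Matrix k l ℝ) :
    reMat (cplx U + Complex.I • cplx V) = U := by
  ext i j; simp [reMat, cplx]

lemma imMat_expand {k l : Type*} (U V : Matrix k l ℝ) :
    imMat (cplx U + Complex.I • cplx V) = V := by
  ext i j; simp [imMat, cplx]

/-- Compatibility of the adjoint action of `K^J` on `𝔭^J` with the natural
action of `U(n) × S(n,ℝ)` on `T_{n,m}`: with `u = A + iB`, `ω = X + iY` and
`z = P + iQ`, one has `Φ(Ad(k^J)α) = (u ω ᵗu, z ᵗu) = θ(k^J) · Φ(α)`. -/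
theorem ad_KJ_compatible {n m : ℕ} (A B : Matrix (Fin n) (Fin n) ℝ)
    (kap : Matrix (Fin m) (Fin m) ℝ) (X Y : Matrix (Fin n) (Fin n) ℝ)
    (P Q : Matrix (Fin m) (Fin n) ℝ)
    (hK₁ : A * Aᵀ + B * Bᵀ = 1) (hK₂ : A * Bᵀ = B * Aᵀ)
    (hkap : kapᵀ = kap) (hX : Xᵀ = X) (hY : Yᵀ = Y) :
    rho A (-B) B A 0 0 kap * iota X Y Y P Q 0 * (rho A (-B) B A 0 0 kap)⁻¹ =
      iota (reMat ((cplx A + Complex.I • cplx B) * (cplx X + Complex.I • cplx Y) *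
                     (cplx A + Complex.I • cplx B)ᵀ))
           (imMat ((cplx A + Complex.I • cplx B) * (cplx X + Complex.I • cplx Y) *
                     (cplx A + Complex.I • cplx B)ᵀ))
           (imMat ((cplx A + Complex.I • cplx B) * (cplx X + Complex.I • cplx Y) *
                     (cplx A + Complex.I • cplx B)ᵀ))
           (reMat ((cplx P + Complex.I • cplx Q) * (cplx A + Complex.I • cplx B)ᵀ))
           (imMat ((cplx P + Complex.I • cplx Q) * (cplx A + Complex.I • cplx B)ᵀ))
           0 := by
  have homega : (cplx A + Complex.I • cplx B) * (cplx X + Complex.I • cplx Y) *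
      (cplx A + Complex.I • cplx B)ᵀ
      = cplx ((A*X - B*Y)*Aᵀ - (A*Y + B*X)*Bᵀ)
        + Complex.I • cplx ((A*X - B*Y)*Bᵀ + (A*Y + B*X)*Aᵀ) := by
    rw [transpose_expand, mul_expand, mul_expand]
  have hz : (cplx P + Complex.I • cplx Q) * (cplx A + Complex.I • cplx B)ᵀ
      = cplx (P*Aᵀ - Q*Bᵀ) + Complex.I • cplx (P*Bᵀ + Q*Aᵀ) := by
    rw [transpose_expand, mul_expand]
  rw [homega, hz, reMat_expand, imMat_expand, reMat_expand, imMat_expand]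
  have hinv : (rho A (-B) B A 0 0 kap)⁻¹ = rho Aᵀ Bᵀ (-Bᵀ) Aᵀ 0 0 (-kap) := by
    have hK₁' : B * Bᵀ + A * Aᵀ = 1 := by rw [add_comm]; exact hK₁
    apply Matrix.inv_eq_right_inv
    simp only [rho, transpose_zero, Matrix.mul_zero, sub_zero, fromBlocks_multiply,
      Matrix.mul_one, Matrix.one_mul, Matrix.mul_zero, Matrix.zero_mul, add_zero, zero_add,
      Matrix.mul_neg, Matrix.neg_mul, neg_neg, neg_zero, hK₂, fromBlocks_add, hK₁, hK₁',
      add_neg_cancel, neg_add_cancel, fromBlocks_one, fromBlocks_zero]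
  rw [hinv]
  simp only [rho, iota, transpose_zero, Matrix.mul_zero, sub_zero, fromBlocks_multiply,
    Matrix.mul_one, Matrix.one_mul, Matrix.zero_mul, add_zero, zero_add,
    Matrix.mul_neg, Matrix.neg_mul, neg_neg, neg_zero, fromBlocks_add]
  rw [Matrix.fromBlocks_inj]
  refine ⟨?_, ?_, ?_, ?_⟩ <;> rw [Matrix.fromBlocks_inj] <;> refine ⟨?_, ?_, ?_, ?_⟩ <;>
    simp only [hX, hY, transpose_mul, transpose_add, transpose_sub, transpose_neg,
      transpose_transpose, Matrix.add_mul, Matrix.sub_mul, Matrix.neg_mul,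
      sub_eq_add_neg, neg_add, neg_neg, Matrix.mul_assoc] <;> abel
end

section
/- For k^J = ([[A,−B],[B,A]],(0,0,κ)) ∈ K^J and α = ([[X,Y],[Y,−X]],(P,Q,0)) ∈ 𝔭^J, the adjoint action Ad(k^J)α equals ([[X_*,Y_*],[Y_*,−X_*]],(P_*,Q_*,0)) where X_* = AXᵗA − (BXᵗB + BYᵗA + AYᵗB), Y_* = AXᵗB + AYᵗA + BXᵗA − BYᵗB, P_* = PᵗA − QᵗB, Q_* = PᵗB + QᵗA. -/
open Matrix

/-- Explicit formula for the adjoint action of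
`k^J = ([[A,−B],[B,A]],(0,0,κ)) ∈ K^J` on
`α = ([[X,Y],[Y,−X]],(P,Q,0)) ∈ 𝔭^J`. -/
theorem ad_KJ_formula {n m : ℕ} (A B : Matrix (Fin n) (Fin n) ℝ)
    (kap : Matrix (Fin m) (Fin m) ℝ) (X Y : Matrix (Fin n) (Fin n) ℝ)
    (P Q : Matrix (Fin m) (Fin n) ℝ)
    (hK₁ : A * Aᵀ + B * Bᵀ = 1) (hK₂ : A * Bᵀ = B * Aᵀ)
    (hkap : kapᵀ = kap) (hX : Xᵀ = X) (hY : Yᵀ = Y) :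
    rho A (-B) B A 0 0 kap * iota X Y Y P Q 0 * (rho A (-B) B A 0 0 kap)⁻¹ =
      iota (A * X * Aᵀ - (B * X * Bᵀ + B * Y * Aᵀ + A * Y * Bᵀ))
           (A * X * Bᵀ + A * Y * Aᵀ + B * X * Aᵀ - B * Y * Bᵀ)
           (A * X * Bᵀ + A * Y * Aᵀ + B * X * Aᵀ - B * Y * Bᵀ)
           (P * Aᵀ - Q * Bᵀ) (P * Bᵀ + Q * Aᵀ) 0 := by
  have hinv : (rho A (-B) B A 0 0 kap)⁻¹ = rho Aᵀ Bᵀ (-Bᵀ) Aᵀ 0 0 (-kap) := by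
    apply inv_eq_right_inv
    simp [rho, Matrix.fromBlocks_multiply, ← Matrix.fromBlocks_one,
      hK₂, Matrix.fromBlocks_add, hK₁, add_comm (B * Bᵀ) (A * Aᵀ)]
  rw [hinv]
  simp only [rho, iota, Matrix.fromBlocks_multiply, Matrix.fromBlocks_add,
    Matrix.transpose_zero, Matrix.mul_zero, Matrix.zero_mul, Matrix.mul_one,
    Matrix.one_mul, add_zero, zero_add, sub_zero, Matrix.neg_mul, Matrix.mul_neg,
    neg_neg, Matrix.transpose_add, Matrix.transpose_sub, Matrix.transpose_mul,
    Matrix.transpose_transpose, Matrix.transpose_neg, hX, hY, hkap, Matrix.add_mul,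
    Matrix.sub_mul, Matrix.mul_add, Matrix.mul_sub, neg_add, neg_sub,
    Matrix.mul_assoc]
  abel
end

section
/- Under the partial Cayley transform, writing Ω = i(I_n+W)(I_n−W)⁻¹ for W ∈ 𝔻_n, the imaginary part Y = (Ω − Ω̄)/(2i) satisfies Y = (I_n−W)⁻¹(I_n − WW̄)(I_n−W̄)⁻¹. -/
open Matrix Complex
open scoped ComplexOrder

/-- Entrywise conjugate of a complex matrix. -/
def conjMat {k l : Type*} (M : Matrix k l ℂ) : Matrix k l ℂ :=
  M.map (starRingEnd ℂ)

/-- Membership in the generalized unit disk `𝔻_n`. -/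
def InDisk {n : ℕ} (W : Matrix (Fin n) (Fin n) ℂ) : Prop :=
  W = Wᵀ ∧ (1 - conjMat W * W).PosDef

/-! With `A = 1 - W` and `B = 1 - W̄`, the Cayley transform is `(1 + W) A⁻¹ = 2 A⁻¹ - 1`,
so `Ω = i (2 A⁻¹ - 1)`, `Ω̄ = -i (2 B⁻¹ - 1)` and `Y = A⁻¹ + B⁻¹ - 1`. On the other side
`1 - W W̄ = A + B - A B`, whence `A⁻¹ (1 - W W̄) B⁻¹ = B⁻¹ + A⁻¹ - 1` as well. Invertibility
of `A` comes from `W̄ = Wᴴ`: a fixed vector `W v = v` would make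
`v* (1 - Wᴴ W) v = ‖v‖² - ‖W v‖²` vanish. -/

section conjMat

variable {k m : Type*}

lemma conjMat_eq_transpose_conjTranspose (M : Matrix k m ℂ) : conjMat M = Mᴴᵀ :=
  rfl

lemma conjMat_eq_conjTranspose_of_transpose_eq {W : Matrix m m ℂ} (hW : Wᵀ = W) :
    conjMat W = Wᴴ := by
  rw [conjMat_eq_transpose_conjTranspose,
    ← conjTranspose_transpose_eq_transpose_conjTranspose, hW]

lemma conjMat_smul (c : ℂ) (M : Matrix k m ℂ) :
    conjMat (c • M) = starRingEnd ℂ c • conjMat M := by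
  ext; simp [conjMat]

lemma conjMat_nsmul (c : ℕ) (M : Matrix k m ℂ) : conjMat (c • M) = c • conjMat M := by
  ext; simp [conjMat]

lemma conjMat_sub (M N : Matrix k m ℂ) : conjMat (M - N) = conjMat M - conjMat N := by
  ext; simp [conjMat]

lemma conjMat_one [DecidableEq m] : conjMat (1 : Matrix m m ℂ) = 1 := by
  simp [conjMat]

variable [Fintype m] [DecidableEq m]

lemma conjMat_inv (M : Matrix m m ℂ) : conjMat M⁻¹ = (conjMat M)⁻¹ := by
  simp only [conjMat_eq_transpose_conjTranspose, conjTranspose_nonsing_inv,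
    transpose_nonsing_inv]

lemma isUnit_det_conjMat {M : Matrix m m ℂ} (hM : IsUnit M.det) : IsUnit (conjMat M).det := by
  rw [conjMat_eq_transpose_conjTranspose, det_transpose, det_conjTranspose]
  exact hM.star

end conjMat

lemma isUnit_det_one_sub_of_posDef {n 𝕜 : Type*} [Fintype n] [DecidableEq n] [RCLike 𝕜]
    {A : Matrix n n 𝕜} (hA : (1 - Aᴴ * A).PosDef) : IsUnit (1 - A).det := by
  rw [isUnit_iff_ne_zero, Ne, ← exists_mulVec_eq_zero_iff]
  rintro ⟨v, hv, hfix⟩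
  have hAv : A *ᵥ v = v := by
    rw [sub_mulVec, one_mulVec, sub_eq_zero] at hfix
    exact hfix.symm
  have hpos := hA.dotProduct_mulVec_pos hv
  rw [sub_mulVec, one_mulVec, ← mulVec_mulVec, hAv, dotProduct_sub, dotProduct_mulVec,
    ← star_mulVec, hAv, sub_self] at hpos
  exact hpos.false

section Cayley

variable {m R : Type*} [Fintype m] [DecidableEq m] [CommRing R] {W V : Matrix m m R}

lemma one_add_mul_inv_one_sub (hW : IsUnit (1 - W).det) :
    (1 + W) * (1 - W)⁻¹ = 2 • (1 - W)⁻¹ - 1 := by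
  have : 1 + W = 2 • 1 - (1 - W) := by abel
  rw [this, sub_mul, mul_nonsing_inv _ hW, smul_mul, one_mul]

lemma inv_one_sub_mul_one_sub_mul_mul_inv_one_sub (hW : IsUnit (1 - W).det)
    (hV : IsUnit (1 - V).det) :
    (1 - W)⁻¹ * (1 - W * V) * (1 - V)⁻¹ = (1 - W)⁻¹ + (1 - V)⁻¹ - 1 := by
  have : 1 - W * V = (1 - W) + (1 - V) - (1 - W) * (1 - V) := by noncomm_ring
  rw [this, mul_sub, mul_add, nonsing_inv_mul _ hW, ← mul_assoc, nonsing_inv_mul _ hW,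
    one_mul, sub_mul, add_mul, mul_nonsing_inv _ hV, mul_assoc, mul_nonsing_inv _ hV,
    one_mul, mul_one]
  abel

end Cayley

/-- Under the partial Cayley transform `Ω = i(I+W)(I−W)⁻¹`, the imaginary
part `Y = (Ω − Ω̄)/(2i)` satisfies `Y = (I−W)⁻¹(I − W W̄)(I−W̄)⁻¹`. -/
theorem cayley_imaginary_part {n : ℕ} (W : Matrix (Fin n) (Fin n) ℂ)
    (hW : InDisk W) :
    (2 * Complex.I)⁻¹ •
        (Complex.I • ((1 + W) * (1 - W)⁻¹) -
          conjMat (Complex.I • ((1 + W) * (1 - W)⁻¹))) =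
      (1 - W)⁻¹ * (1 - W * conjMat W) * (1 - conjMat W)⁻¹ := by
  obtain ⟨hsymm, hpos⟩ := hW
  rw [conjMat_eq_conjTranspose_of_transpose_eq hsymm.symm] at hpos
  have hA : IsUnit (1 - W).det := isUnit_det_one_sub_of_posDef hpos
  have hB : IsUnit (1 - conjMat W).det := by
    simpa only [conjMat_sub, conjMat_one] using isUnit_det_conjMat hA
  rw [one_add_mul_inv_one_sub hA, inv_one_sub_mul_one_sub_mul_mul_inv_one_sub hA hB]
  simp only [conjMat_smul, conj_I, conjMat_sub, conjMat_nsmul, conjMat_one, conjMat_inv]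
  match_scalars <;> field_simp
  ring
end
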